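/- For every integer n ≥ 1, all real s, t, and every θ ∈ [0,1], the modulus of αₙ(s,t,θ) = Π_{j=1}^n (1 + i·s·sin(2π·8^j·θ)/√n) · Π_{j=1}^n (1 + i·t·cos(2π·8^j·θ)/√n) satisfies |αₙ(s,t,θ)| ≤ exp( (s²+t²)/4 + Σ_{j=1}^n (t²−s²)·cos(4π·8^j·θ)/(4n) ). -/

import Mathlib

/-! Each factor satisfies `|1 + ix| = √(1 + x²) ≤ exp (x² / 2)`, so `|αₙ|` is at most the
exponential of `Σⱼ (s² sin² + t² cos²)(2π 8ʲ θ) / (2n)`; the double-angle formula turns each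
summand into `((s² + t²) + (t² - s²) cos (4π 8ʲ θ)) / (4n)`. -/

open MeasureTheory
open scoped Real

/-- `αₙ(s,t,θ) = Π_{j=1}^n (1 + i·s·sin(2π·8^j·θ)/√n) · Π_{j=1}^n (1 + i·t·cos(2π·8^j·θ)/√n)`. -/
noncomputable def lacunaryProd (n : ℕ) (s t θ : ℝ) : ℂ :=
  (∏ j ∈ Finset.Icc 1 n, (1 + Complex.I * s * Real.sin (2 * π * 8 ^ j * θ) / Real.sqrt n)) *
  (∏ j ∈ Finset.Icc 1 n, (1 + Complex.I * t * Real.cos (2 * π * 8 ^ j * θ) / Real.sqrt n))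

open Complex in
lemma norm_one_add_mul_I_le_exp (x : ℝ) : ‖1 + x * I‖ ≤ Real.exp (x ^ 2 / 2) := by
  rw [← ofReal_one, norm_add_mul_I, one_pow, Real.exp_half]
  exact Real.sqrt_le_sqrt (by linarith [Real.add_one_le_exp (x ^ 2)])

open Complex in
lemma norm_prod_one_add_mul_I_le_exp {ι : Type*} (S : Finset ι) (x : ι → ℝ) :
    ‖∏ j ∈ S, (1 + x j * I)‖ ≤ Real.exp (∑ j ∈ S, x j ^ 2 / 2) := by
  rw [norm_prod, Real.exp_sum]
  exact Finset.prod_le_prod (fun _ _ => norm_nonneg _) fun j _ => norm_one_add_mul_I_le_exp (x j)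

lemma sq_mul_sin_add_sq_mul_cos (a b x : ℝ) :
    (a * Real.sin x) ^ 2 / 2 + (b * Real.cos x) ^ 2 / 2
      = (a ^ 2 + b ^ 2) / 4 + (b ^ 2 - a ^ 2) * Real.cos (2 * x) / 4 := by
  rw [Real.cos_two_mul, mul_pow, mul_pow, Real.sin_sq]
  ring

theorem abs_lacunaryProd_le_general (n : ℕ) (hn : 1 ≤ n) (s t : ℝ) (θ : ℝ) :
    ‖lacunaryProd n s t θ‖ ≤
      Real.exp ((s ^ 2 + t ^ 2) / 4 +
        ∑ j ∈ Finset.Icc 1 n, (t ^ 2 - s ^ 2) * Real.cos (4 * π * 8 ^ j * θ) / (4 * n)) := by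
  have hn0 : (n : ℝ) ≠ 0 := by positivity
  have hfactor (a y : ℝ) :
      (1 + Complex.I * a * y / Real.sqrt n : ℂ) = 1 + ((a * y / Real.sqrt n : ℝ) : ℂ) * Complex.I := by
    push_cast; ring
  have hexponent (j : ℕ) :
      (s * Real.sin (2 * π * 8 ^ j * θ) / Real.sqrt n) ^ 2 / 2
          + (t * Real.cos (2 * π * 8 ^ j * θ) / Real.sqrt n) ^ 2 / 2
        = (s ^ 2 + t ^ 2) / (4 * n) + (t ^ 2 - s ^ 2) * Real.cos (4 * π * 8 ^ j * θ) / (4 * n) := by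
    have hdouble : 2 * (2 * π * 8 ^ j * θ) = 4 * π * 8 ^ j * θ := by ring
    rw [div_pow, div_pow, Real.sq_sqrt n.cast_nonneg]
    calc _ = ((s * Real.sin (2 * π * 8 ^ j * θ)) ^ 2 / 2
              + (t * Real.cos (2 * π * 8 ^ j * θ)) ^ 2 / 2) / n := by ring
      _ = _ := by rw [sq_mul_sin_add_sq_mul_cos, hdouble]; ring
  calc ‖lacunaryProd n s t θ‖
      ≤ Real.exp (∑ j ∈ Finset.Icc 1 n, (s * Real.sin (2 * π * 8 ^ j * θ) / Real.sqrt n) ^ 2 / 2) *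
          Real.exp (∑ j ∈ Finset.Icc 1 n, (t * Real.cos (2 * π * 8 ^ j * θ) / Real.sqrt n) ^ 2 / 2) := by
        simp only [lacunaryProd, hfactor, norm_mul]
        gcongr <;> apply norm_prod_one_add_mul_I_le_exp
    _ = _ := by
        rw [← Real.exp_add, ← Finset.sum_add_distrib, Finset.sum_congr rfl fun j _ => hexponent j,
          Finset.sum_add_distrib, Finset.sum_const, Nat.card_Icc, Nat.add_sub_cancel, nsmul_eq_mul]
        congr 2
        field_simp

theorem abs_lacunaryProd_le (n : ℕ) (hn : 1 ≤ n) (s t : ℝ) (θ : ℝ)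
    (hθ : θ ∈ Set.Icc (0:ℝ) 1) :
    ‖lacunaryProd n s t θ‖ ≤
      Real.exp ((s ^ 2 + t ^ 2) / 4 +
        ∑ j ∈ Finset.Icc 1 n, (t ^ 2 - s ^ 2) * Real.cos (4 * π * 8 ^ j * θ) / (4 * n)) :=
  abs_lacunaryProd_le_general n hn s t θ
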